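/- Let C₁, C₂ be conjugations on a complex Hilbert space H and let Q = C⋄ ∘ C⊞ : H ⊕ H → H ⊕ H. Then Q is an orthogonal projection (i.e. Q is linear, Q² = Q and Q* = Q), its range is {C₁f ⊕ C₂f : f ∈ H} and its kernel is {C₁f ⊕ (−C₂f) : f ∈ H}. -/

import Mathlib

/-!
Because `C₁` and `C₂` are antilinear involutions, the two factors `1/√2` combine to `1/2` and
`Q (f ⊕ g) = ½ (f + C₁C₂ g) ⊕ ½ (C₂C₁ f + g)`. Here `C₁C₂` is linear with adjoint `C₂C₁`
(`⟪C₁C₂ x, y⟫ = ⟪x, C₂C₁ y⟫`), and `C₂C₁` is its inverse, so linearity, idempotence and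
self-adjointness of `Q` can be read off this formula. The range of `Q` lies in that of `C⋄`, whose
points `C₁f ⊕ C₂f` are fixed by `Q`; and `C⋄` is injective, so the kernel of `Q` is that of `C⊞`.
-/

open scoped ComplexInnerProductSpace

noncomputable section

/-- X is a bounded antilinear operator. -/
def IsBddAntilinear {E F : Type*} [NormedAddCommGroup E] [InnerProductSpace ℂ E]
    [NormedAddCommGroup F] [InnerProductSpace ℂ F] (X : E → F) : Prop :=
  (∀ x y, X (x + y) = X x + X y) ∧
  (∀ (a : ℂ) (x : E), X (a • x) = (starRingEnd ℂ) a • X x) ∧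
  Continuous X

/-- C is a conjugation: an antilinear involution with ⟨Cf, Cg⟩ = ⟨g, f⟩. -/
def IsConjugation {H : Type*} [NormedAddCommGroup H] [InnerProductSpace ℂ H] (C : H → H) : Prop :=
  (∀ x y, C (x + y) = C x + C y) ∧
  (∀ (a : ℂ) (x : H), C (a • x) = (starRingEnd ℂ) a • C x) ∧
  (∀ x, C (C x) = x) ∧
  (∀ x y, ⟪C x, C y⟫ = ⟪y, x⟫)

/-- C⋄ = (1/√2)(C₁ ⋄ C₂) : H → H ⊕ H, f ↦ (1/√2)(C₁f ⊕ C₂f). -/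
def Cdia {H : Type*} [NormedAddCommGroup H] [InnerProductSpace ℂ H] (C₁ C₂ : H → H) :
    H → H × H :=
  fun f => (((Real.sqrt 2 : ℂ))⁻¹ • C₁ f, ((Real.sqrt 2 : ℂ))⁻¹ • C₂ f)

/-- C⊞ = (1/√2)(C₁ ⊞ C₂) : H ⊕ H → H, f ⊕ g ↦ (1/√2)(C₁f + C₂g). -/
def Cbox {H : Type*} [NormedAddCommGroup H] [InnerProductSpace ℂ H] (C₁ C₂ : H → H) :
    H × H → H :=
  fun p => ((Real.sqrt 2 : ℂ))⁻¹ • C₁ p.1 + ((Real.sqrt 2 : ℂ))⁻¹ • C₂ p.2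

namespace IsConjugation

variable {H : Type*} [NormedAddCommGroup H] [InnerProductSpace ℂ H] {C C' : H → H}

lemma map_add (hC : IsConjugation C) (x y : H) : C (x + y) = C x + C y := hC.1 x y

lemma map_smul (hC : IsConjugation C) (a : ℂ) (x : H) :
    C (a • x) = (starRingEnd ℂ) a • C x :=
  hC.2.1 a x

lemma map_map (hC : IsConjugation C) (x : H) : C (C x) = x := hC.2.2.1 x

lemma inner_map_map (hC : IsConjugation C) (x y : H) : ⟪C x, C y⟫ = ⟪y, x⟫ := hC.2.2.2 x y

lemma map_smul_of_conj_eq (hC : IsConjugation C) {a : ℂ} (ha : (starRingEnd ℂ) a = a) (x : H) :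
    C (a • x) = a • C x := by
  rw [hC.map_smul, ha]

lemma map_zero (hC : IsConjugation C) : C 0 = 0 := by
  simpa using hC.map_smul 0 0

lemma map_neg (hC : IsConjugation C) (x : H) : C (-x) = -C x := by
  simpa using hC.map_smul (-1) x

lemma map_eq_iff_eq_map (hC : IsConjugation C) {x y : H} : C x = y ↔ x = C y :=
  ⟨fun h => by rw [← h, hC.map_map], fun h => by rw [h, hC.map_map]⟩

lemma map_eq_zero_iff (hC : IsConjugation C) {x : H} : C x = 0 ↔ x = 0 := by
  rw [hC.map_eq_iff_eq_map, hC.map_zero]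

lemma inner_map_map_left (hC : IsConjugation C) (hC' : IsConjugation C') (x y : H) :
    ⟪C (C' x), y⟫ = ⟪x, C' (C y)⟫ :=
  calc ⟪C (C' x), y⟫ = ⟪C (C' x), C (C y)⟫ := by rw [hC.map_map]
    _ = ⟪C' (C' (C y)), C' x⟫ := by rw [hC.inner_map_map, hC'.map_map]
    _ = ⟪x, C' (C y)⟫ := hC'.inner_map_map _ _

end IsConjugation

section Projection

variable {H : Type*} [NormedAddCommGroup H] [InnerProductSpace ℂ H] {C₁ C₂ : H → H}

lemma conj_sqrt_two_inv : (starRingEnd ℂ) (Real.sqrt 2 : ℂ)⁻¹ = (Real.sqrt 2 : ℂ)⁻¹ := by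
  rw [map_inv₀, Complex.conj_ofReal]

lemma sqrt_two_inv_mul_self : (Real.sqrt 2 : ℂ)⁻¹ * (Real.sqrt 2 : ℂ)⁻¹ = (2 : ℂ)⁻¹ := by
  rw [← mul_inv, ← Complex.ofReal_mul, Real.mul_self_sqrt zero_le_two, Complex.ofReal_ofNat]

lemma conj_two_inv : (starRingEnd ℂ) (2 : ℂ)⁻¹ = (2 : ℂ)⁻¹ := by
  rw [map_inv₀, map_ofNat]

lemma Cdia_eq (h₁ : IsConjugation C₁) (h₂ : IsConjugation C₂) (f : H) :
    Cdia C₁ C₂ f = (C₁ ((Real.sqrt 2 : ℂ)⁻¹ • f), C₂ ((Real.sqrt 2 : ℂ)⁻¹ • f)) := by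
  rw [h₁.map_smul_of_conj_eq conj_sqrt_two_inv, h₂.map_smul_of_conj_eq conj_sqrt_two_inv]
  rfl

lemma Cdia_Cbox_apply (h₁ : IsConjugation C₁) (h₂ : IsConjugation C₂) (p : H × H) :
    Cdia C₁ C₂ (Cbox C₁ C₂ p) =
      ((2 : ℂ)⁻¹ • (p.1 + C₁ (C₂ p.2)), (2 : ℂ)⁻¹ • (C₂ (C₁ p.1) + p.2)) := by
  simp only [Cdia, Cbox, h₁.map_add, h₂.map_add, h₁.map_smul_of_conj_eq conj_sqrt_two_inv,
    h₂.map_smul_of_conj_eq conj_sqrt_two_inv, h₁.map_map, h₂.map_map, smul_add, smul_smul,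
    sqrt_two_inv_mul_self]

lemma Cdia_Cbox_add (h₁ : IsConjugation C₁) (h₂ : IsConjugation C₂) (p q : H × H) :
    Cdia C₁ C₂ (Cbox C₁ C₂ (p + q)) = Cdia C₁ C₂ (Cbox C₁ C₂ p) + Cdia C₁ C₂ (Cbox C₁ C₂ q) := by
  simp only [Cdia_Cbox_apply h₁ h₂, Prod.fst_add, Prod.snd_add, h₁.map_add, h₂.map_add,
    Prod.mk_add_mk, Prod.mk.injEq]
  constructor <;> module

lemma Cdia_Cbox_smul (h₁ : IsConjugation C₁) (h₂ : IsConjugation C₂) (a : ℂ) (p : H × H) :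
    Cdia C₁ C₂ (Cbox C₁ C₂ (a • p)) = a • Cdia C₁ C₂ (Cbox C₁ C₂ p) := by
  simp only [Cdia_Cbox_apply h₁ h₂, Prod.smul_fst, Prod.smul_snd, h₁.map_smul, h₂.map_smul,
    Complex.conj_conj, Prod.smul_mk, Prod.mk.injEq]
  constructor <;> module

lemma Cdia_Cbox_idem (h₁ : IsConjugation C₁) (h₂ : IsConjugation C₂) (p : H × H) :
    Cdia C₁ C₂ (Cbox C₁ C₂ (Cdia C₁ C₂ (Cbox C₁ C₂ p))) = Cdia C₁ C₂ (Cbox C₁ C₂ p) := by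
  simp only [Cdia_Cbox_apply h₁ h₂, h₁.map_smul, h₂.map_smul, h₁.map_add, h₂.map_add,
    h₁.map_map, h₂.map_map, conj_two_inv, Prod.mk.injEq]
  constructor <;> module

lemma inner_Cdia_Cbox_left (h₁ : IsConjugation C₁) (h₂ : IsConjugation C₂) (p q : H × H) :
    ⟪(Cdia C₁ C₂ (Cbox C₁ C₂ p)).1, q.1⟫ + ⟪(Cdia C₁ C₂ (Cbox C₁ C₂ p)).2, q.2⟫ =
      ⟪p.1, (Cdia C₁ C₂ (Cbox C₁ C₂ q)).1⟫ + ⟪p.2, (Cdia C₁ C₂ (Cbox C₁ C₂ q)).2⟫ := by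
  simp only [Cdia_Cbox_apply h₁ h₂, inner_smul_left, inner_smul_right, inner_add_left,
    inner_add_right, conj_two_inv, h₁.inner_map_map_left h₂, h₂.inner_map_map_left h₁]
  ring

lemma range_Cdia_Cbox (h₁ : IsConjugation C₁) (h₂ : IsConjugation C₂) :
    Set.range (fun p : H × H => Cdia C₁ C₂ (Cbox C₁ C₂ p)) =
      {p : H × H | ∃ f : H, p = (C₁ f, C₂ f)} := by
  ext p
  constructor
  · rintro ⟨q, rfl⟩
    exact ⟨_, Cdia_eq h₁ h₂ _⟩
  · rintro ⟨f, rfl⟩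
    refine ⟨(C₁ f, C₂ f), ?_⟩
    simp only [Cdia_Cbox_apply h₁ h₂, h₁.map_map, h₂.map_map, Prod.mk.injEq]
    constructor <;> module

lemma Cdia_eq_zero_iff (h₁ : IsConjugation C₁) (h₂ : IsConjugation C₂) {f : H} :
    Cdia C₁ C₂ f = 0 ↔ f = 0 := by
  have hsqrt : (Real.sqrt 2 : ℂ)⁻¹ ≠ 0 := by simp
  simp only [Cdia, Prod.mk_eq_zero, smul_eq_zero_iff_right hsqrt, h₁.map_eq_zero_iff,
    h₂.map_eq_zero_iff, and_self]

lemma Cbox_eq_zero_iff (h₂ : IsConjugation C₂) {p : H × H} :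
    Cbox C₁ C₂ p = 0 ↔ p.2 = -C₂ (C₁ p.1) := by
  rw [Cbox, ← smul_add, smul_eq_zero_iff_right (by simp), add_eq_zero_iff_eq_neg',
    h₂.map_eq_iff_eq_map, h₂.map_neg]

lemma setOf_Cdia_Cbox_eq_zero (h₁ : IsConjugation C₁) (h₂ : IsConjugation C₂) :
    {p : H × H | Cdia C₁ C₂ (Cbox C₁ C₂ p) = 0} = {p : H × H | ∃ f : H, p = (C₁ f, -(C₂ f))} := by
  ext ⟨x, y⟩
  simp only [Set.mem_ofPred_eq, Cdia_eq_zero_iff h₁ h₂, Cbox_eq_zero_iff h₂, Prod.mk.injEq]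
  constructor
  · rintro rfl
    exact ⟨C₁ x, (h₁.map_map x).symm, rfl⟩
  · rintro ⟨f, rfl, rfl⟩
    rw [h₁.map_map]

end Projection

theorem stmt3_general {H : Type*} [NormedAddCommGroup H] [InnerProductSpace ℂ H]
    (C₁ C₂ : H → H) (h₁ : IsConjugation C₁) (h₂ : IsConjugation C₂) :
    (∀ p q : H × H, Cdia C₁ C₂ (Cbox C₁ C₂ (p + q)) =
      Cdia C₁ C₂ (Cbox C₁ C₂ p) + Cdia C₁ C₂ (Cbox C₁ C₂ q)) ∧
    (∀ (a : ℂ) (p : H × H), Cdia C₁ C₂ (Cbox C₁ C₂ (a • p)) = a • Cdia C₁ C₂ (Cbox C₁ C₂ p)) ∧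
    (∀ p : H × H, Cdia C₁ C₂ (Cbox C₁ C₂ (Cdia C₁ C₂ (Cbox C₁ C₂ p))) =
      Cdia C₁ C₂ (Cbox C₁ C₂ p)) ∧
    (∀ p q : H × H,
      ⟪(Cdia C₁ C₂ (Cbox C₁ C₂ p)).1, q.1⟫ + ⟪(Cdia C₁ C₂ (Cbox C₁ C₂ p)).2, q.2⟫ =
        ⟪p.1, (Cdia C₁ C₂ (Cbox C₁ C₂ q)).1⟫ + ⟪p.2, (Cdia C₁ C₂ (Cbox C₁ C₂ q)).2⟫) ∧
    (Set.range (fun p : H × H => Cdia C₁ C₂ (Cbox C₁ C₂ p)) =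
      {p : H × H | ∃ f : H, p = (C₁ f, C₂ f)}) ∧
    ({p : H × H | Cdia C₁ C₂ (Cbox C₁ C₂ p) = 0} =
      {p : H × H | ∃ f : H, p = (C₁ f, -(C₂ f))}) :=
  ⟨Cdia_Cbox_add h₁ h₂, Cdia_Cbox_smul h₁ h₂, Cdia_Cbox_idem h₁ h₂, inner_Cdia_Cbox_left h₁ h₂,
    range_Cdia_Cbox h₁ h₂, setOf_Cdia_Cbox_eq_zero h₁ h₂⟩

/-- Proposition 2.3 (4),(5),(6): Q = C⋄ ∘ C⊞ is an orthogonal projection on H ⊕ H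
(linear, idempotent, selfadjoint), with range {C₁f ⊕ C₂f : f ∈ H} and
kernel {C₁f ⊕ (−C₂f) : f ∈ H}. -/
theorem stmt3 {H : Type*} [NormedAddCommGroup H] [InnerProductSpace ℂ H] [CompleteSpace H]
    (C₁ C₂ : H → H) (h₁ : IsConjugation C₁) (h₂ : IsConjugation C₂) :
    (∀ p q : H × H, Cdia C₁ C₂ (Cbox C₁ C₂ (p + q)) =
      Cdia C₁ C₂ (Cbox C₁ C₂ p) + Cdia C₁ C₂ (Cbox C₁ C₂ q)) ∧
    (∀ (a : ℂ) (p : H × H), Cdia C₁ C₂ (Cbox C₁ C₂ (a • p)) = a • Cdia C₁ C₂ (Cbox C₁ C₂ p)) ∧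
    (∀ p : H × H, Cdia C₁ C₂ (Cbox C₁ C₂ (Cdia C₁ C₂ (Cbox C₁ C₂ p))) =
      Cdia C₁ C₂ (Cbox C₁ C₂ p)) ∧
    (∀ p q : H × H,
      ⟪(Cdia C₁ C₂ (Cbox C₁ C₂ p)).1, q.1⟫ + ⟪(Cdia C₁ C₂ (Cbox C₁ C₂ p)).2, q.2⟫ =
        ⟪p.1, (Cdia C₁ C₂ (Cbox C₁ C₂ q)).1⟫ + ⟪p.2, (Cdia C₁ C₂ (Cbox C₁ C₂ q)).2⟫) ∧
    (Set.range (fun p : H × H => Cdia C₁ C₂ (Cbox C₁ C₂ p)) =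
      {p : H × H | ∃ f : H, p = (C₁ f, C₂ f)}) ∧
    ({p : H × H | Cdia C₁ C₂ (Cbox C₁ C₂ p) = 0} =
      {p : H × H | ∃ f : H, p = (C₁ f, -(C₂ f))}) :=
  stmt3_general C₁ C₂ h₁ h₂
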